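/- arXiv:2511.08538 — 2 statements merged into one kernel-verified Lean document; each statement's English description precedes it below -/
import Mathlib

section
/- Let u, u' ∈ ℝ≥0^n and α ≥ 1. Then the following are equivalent: (i) for every k ∈ {1, …, n}, α · Q_k(u) ≥ Q_k(u'); (ii) for every function h : ℝ≥0^n → ℝ≥0 that is symmetric (invariant under permutations of the coordinates), non-decreasing in each coordinate, and concave, one has α · h(u) ≥ h(u'). -/
/-!
Testing `h` against the functions `Qk · k` gives (ii) ⇒ (i). For the converse, concavity and
`h 0 ≥ 0` give `h (α • u) ≤ α * h u`, so it suffices to compare `u'` with `α • u`, both sorted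
increasingly; by (i), the prefix sums of `α • u` dominate those of `u'`. If `u'` is not below
`α • u` coordinatewise (where monotonicity of `h` concludes), take the first coordinate `j` where
it exceeds it and an earlier coordinate `k` where it falls short, and move mass from `j` to `k`
until one of the two gaps closes. By symmetry and concavity this Robin Hood transfer does not
decrease `h`, it keeps the prefix sums dominated, and it lowers the number of coordinates where the
two vectors differ.
-/

open Finset

/-- `Qk x k` is the sum of the `k` smallest coordinates of `x`, i.e. the least
coordinate sum over subsets of size `k`. -/
noncomputable def Qk {n : ℕ} (x : Fin n → ℝ) (k : ℕ) : ℝ :=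
  sInf {s : ℝ | ∃ S : Finset (Fin n), S.card = k ∧ s = ∑ i ∈ S, x i}

theorem ConcaveOn.map_smul_le_mul {𝕜 E : Type*} [Field 𝕜] [LinearOrder 𝕜] [IsStrictOrderedRing 𝕜]
    [AddCommGroup E] [Module 𝕜 E] {s : Set E} {f : E → 𝕜} (hf : ConcaveOn 𝕜 s f) (h0 : 0 ∈ s)
    (hf0 : 0 ≤ f 0) {x : E} {c : 𝕜} (hcx : c • x ∈ s) (hc : 1 ≤ c) : f (c • x) ≤ c * f x := by
  have hc₀ : 0 < c := zero_lt_one.trans_le hc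
  have hc₁ : c⁻¹ ≤ 1 := inv_le_one_of_one_le₀ hc
  have hconv := hf.2 hcx h0 (inv_nonneg.2 hc₀.le) (sub_nonneg.2 hc₁) (add_sub_cancel _ _)
  rw [smul_zero, add_zero, inv_smul_smul₀ hc₀.ne', smul_eq_mul, smul_eq_mul] at hconv
  rw [← inv_mul_le_iff₀ hc₀]
  linarith [mul_nonneg (sub_nonneg.2 hc₁) hf0]

theorem sum_Iic_le_sum_of_card_eq {ι : Type*} [LinearOrder ι] [LocallyFiniteOrderBot ι]
    {x : ι → ℝ} (hx : Monotone x) (m : ι) {S : Finset ι} (hS : #S = #(Iic m)) :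
    ∑ i ∈ Iic m, x i ≤ ∑ i ∈ S, x i := by
  rw [← sum_sdiff_le_sum_sdiff]
  calc ∑ i ∈ Iic m \ S, x i ≤ #(Iic m \ S) • x m :=
        sum_le_card_nsmul _ _ _ fun i hi ↦ hx (mem_Iic.1 (mem_sdiff.1 hi).1)
    _ = #(S \ Iic m) • x m := by rw [card_sdiff_comm hS.symm]
    _ ≤ ∑ i ∈ S \ Iic m, x i :=
        card_nsmul_le_sum _ _ _ fun i hi ↦ hx (not_le.1 (mt mem_Iic.2 (mem_sdiff.1 hi).2)).le

section Qk

variable {n : ℕ}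

theorem finite_subsetSums (x : Fin n → ℝ) (k : ℕ) :
    {s : ℝ | ∃ S : Finset (Fin n), #S = k ∧ s = ∑ i ∈ S, x i}.Finite :=
  (Set.finite_range fun S : Finset (Fin n) ↦ ∑ i ∈ S, x i).subset
    (by rintro _ ⟨S, -, rfl⟩; exact ⟨S, rfl⟩)

theorem qk_le_sum (x : Fin n → ℝ) (S : Finset (Fin n)) : Qk x #S ≤ ∑ i ∈ S, x i :=
  csInf_le (finite_subsetSums x _).bddBelow ⟨S, rfl, rfl⟩

theorem exists_qk_eq_sum (x : Fin n → ℝ) {k : ℕ} (hk : k ≤ n) :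
    ∃ S : Finset (Fin n), #S = k ∧ Qk x k = ∑ i ∈ S, x i := by
  obtain ⟨S, -, hS⟩ := exists_subset_card_eq (s := (univ : Finset (Fin n))) (by simpa using hk)
  exact Set.Nonempty.csInf_mem (by exact ⟨_, S, hS, rfl⟩) (finite_subsetSums x k)

theorem qk_nonneg {x : Fin n → ℝ} (hx : ∀ i, 0 ≤ x i) {k : ℕ} (hk : k ≤ n) : 0 ≤ Qk x k := by
  obtain ⟨S, -, hS⟩ := exists_qk_eq_sum x hk
  exact hS ▸ sum_nonneg fun i _ ↦ hx i

theorem qk_mono {x y : Fin n → ℝ} (hxy : ∀ i, x i ≤ y i) {k : ℕ} (hk : k ≤ n) :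
    Qk x k ≤ Qk y k := by
  obtain ⟨S, rfl, hS⟩ := exists_qk_eq_sum y hk
  exact hS ▸ (qk_le_sum x S).trans (sum_le_sum fun i _ ↦ hxy i)

theorem qk_comp_perm (x : Fin n → ℝ) (σ : Equiv.Perm (Fin n)) (k : ℕ) :
    Qk (x ∘ σ) k = Qk x k := by
  unfold Qk
  congr 1
  ext s
  exact ⟨fun ⟨S, hS, h⟩ ↦ ⟨S.map σ.toEmbedding, by simpa using hS, by simpa using h⟩,
    fun ⟨S, hS, h⟩ ↦ ⟨S.map σ.symm.toEmbedding, by simpa using hS, by simpa using h⟩⟩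

theorem concaveOn_qk {k : ℕ} (hk : k ≤ n) :
    ConcaveOn ℝ {x : Fin n → ℝ | ∀ i, 0 ≤ x i} (Qk · k) := by
  refine ⟨convex_Ici 0, fun x _ y _ a b ha hb _ ↦ ?_⟩
  obtain ⟨S, rfl, hS⟩ := exists_qk_eq_sum (a • x + b • y) hk
  calc a • Qk x #S + b • Qk y #S ≤ a • ∑ i ∈ S, x i + b • ∑ i ∈ S, y i := by
        gcongr <;> exact qk_le_sum _ S
    _ = Qk (a • x + b • y) #S := by simp [hS, sum_add_distrib, mul_sum]

theorem qk_eq_sum_Iic {x : Fin n → ℝ} (hx : Monotone x) (m : Fin n) :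
    Qk x (m + 1) = ∑ i ∈ Iic m, x i := by
  refine le_antisymm (Fin.card_Iic m ▸ qk_le_sum x _) ?_
  obtain ⟨S, hS, h⟩ := exists_qk_eq_sum x (Nat.succ_le_of_lt m.isLt)
  exact h ▸ sum_Iic_le_sum_of_card_eq hx m (hS.trans (Fin.card_Iic m).symm)

end Qk

section Transfer

variable {ι : Type*}

def transfer [DecidableEq ι] (x : ι → ℝ) (j k : ι) (δ : ℝ) : ι → ℝ :=
  x + Pi.single k δ - Pi.single j δ

@[simp]
theorem transfer_apply [DecidableEq ι] (x : ι → ℝ) (j k : ι) (δ : ℝ) (i : ι) :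
    transfer x j k δ i = x i + (if i = k then δ else 0) - (if i = j then δ else 0) := by
  simp [transfer, Pi.single_apply]

theorem transfer_nonneg [DecidableEq ι] {x : ι → ℝ} (hx : ∀ i, 0 ≤ x i) {k j : ι} {δ : ℝ}
    (hδ : 0 ≤ δ) (hδx : δ ≤ x j - x k) (i : ι) : 0 ≤ transfer x j k δ i := by
  have := hx i
  have := hx k
  rw [transfer_apply]
  split_ifs <;> subst_vars <;> linarith

theorem le_apply_smul_add_smul_comp_perm {h : (ι → ℝ) → ℝ}
    (hsymm : ∀ (σ : Equiv.Perm ι) (x : ι → ℝ), h (x ∘ σ) = h x)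
    (hconc : ConcaveOn ℝ {x : ι → ℝ | ∀ i, 0 ≤ x i} h) {x : ι → ℝ} (hx : ∀ i, 0 ≤ x i)
    (σ : Equiv.Perm ι) {t : ℝ} (ht₀ : 0 ≤ t) (ht₁ : t ≤ 1) :
    h x ≤ h ((1 - t) • x + t • (x ∘ σ)) := by
  have := hconc.2 hx (show x ∘ σ ∈ _ from fun i ↦ hx (σ i)) (sub_nonneg.2 ht₁) ht₀ (by ring)
  rwa [hsymm, smul_eq_mul, smul_eq_mul, ← add_mul, sub_add_cancel, one_mul] at this

theorem le_apply_transfer [DecidableEq ι] {h : (ι → ℝ) → ℝ}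
    (hsymm : ∀ (σ : Equiv.Perm ι) (x : ι → ℝ), h (x ∘ σ) = h x)
    (hconc : ConcaveOn ℝ {x : ι → ℝ | ∀ i, 0 ≤ x i} h) {x : ι → ℝ} (hx : ∀ i, 0 ≤ x i)
    {k j : ι} {δ : ℝ} (hδ : 0 ≤ δ) (hδx : δ ≤ x j - x k) : h x ≤ h (transfer x j k δ) := by
  obtain rfl | hδ := hδ.eq_or_lt
  · simp [transfer]
  have hkj : k ≠ j := by rintro rfl; linarith
  have hgap : 0 < x j - x k := hδ.trans_le hδx
  -- the transfer is the point at parameter `δ / (x j - x k)` of the segment `[x, x ∘ swap k j]`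
  convert le_apply_smul_add_smul_comp_perm hsymm hconc hx (Equiv.swap k j) (t := δ / (x j - x k))
    (div_nonneg hδ.le hgap.le) ((div_le_one hgap).2 hδx) using 2
  ext i
  simp only [transfer_apply, Pi.add_apply, Pi.smul_apply, Function.comp_apply, smul_eq_mul]
  rcases eq_or_ne i k with rfl | hik
  · rw [if_pos rfl, if_neg hkj, Equiv.swap_apply_left]
    field_simp
    ring
  rcases eq_or_ne i j with rfl | hij
  · rw [if_neg hik, if_pos rfl, Equiv.swap_apply_right]
    field_simp
    ring
  rw [if_neg hik, if_neg hij, Equiv.swap_apply_of_ne_of_ne hik hij]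
  ring

variable [LinearOrder ι]

theorem exists_lt_lt_of_sum_Iic_le [LocallyFiniteOrderBot ι] [WellFoundedLT ι] {x y : ι → ℝ}
    (hxy : ∀ m, ∑ i ∈ Iic m, x i ≤ ∑ i ∈ Iic m, y i) (hne : ∃ i, y i < x i) :
    ∃ k j, k < j ∧ x k < y k ∧ y j < x j ∧ ∀ i < j, x i ≤ y i := by
  obtain ⟨j, hj, hmin⟩ := wellFounded_lt.has_min {i | y i < x i} hne
  have hsum : ∑ i ∈ Iio j, x i < ∑ i ∈ Iio j, y i := by
    have := hxy j
    rw [← Iio_insert, sum_insert notMem_Iio_self, sum_insert notMem_Iio_self] at this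
    linarith [show y j < x j from hj]
  obtain ⟨k, hk, hxk⟩ := exists_lt_of_sum_lt hsum
  exact ⟨k, j, mem_Iio.1 hk, hxk, hj, fun i hi ↦ not_lt.1 fun h ↦ hmin i h hi⟩

theorem sum_Iic_transfer_le [LocallyFiniteOrderBot ι] {x y : ι → ℝ}
    (hxy : ∀ m, ∑ i ∈ Iic m, x i ≤ ∑ i ∈ Iic m, y i) {k j : ι} (hkj : k < j)
    (hbelow : ∀ i < j, x i ≤ y i) {δ : ℝ} (hδ : δ ≤ y k - x k) (m : ι) :
    ∑ i ∈ Iic m, transfer x j k δ i ≤ ∑ i ∈ Iic m, y i := by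
  rcases lt_or_ge m j with hmj | hjm
  · refine sum_le_sum fun i hi ↦ ?_
    have hij : i < j := (mem_Iic.1 hi).trans_lt hmj
    rcases eq_or_ne i k with rfl | hik
    · simp only [transfer_apply, if_pos, if_neg hij.ne]
      linarith
    · simpa [hik, hij.ne] using hbelow i hij
  · have hk : k ∈ Iic m := mem_Iic.2 (hkj.le.trans hjm)
    have hj : j ∈ Iic m := mem_Iic.2 hjm
    simpa [transfer, sum_add_distrib, sum_sub_distrib, sum_pi_single', hk, hj] using hxy m

theorem card_ne_transfer_lt [Fintype ι] {x y : ι → ℝ} {k j : ι} (hkj : k ≠ j)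
    (hk : x k < y k) (hj : y j < x j) :
    #{i | transfer x j k (min (y k - x k) (x j - y j)) i ≠ y i} < #{i | x i ≠ y i} := by
  have hsub : ({i | transfer x j k (min (y k - x k) (x j - y j)) i ≠ y i} : Finset ι) ⊆
      ({i | x i ≠ y i} : Finset ι) := by
    intro i
    simp only [mem_filter, mem_univ, true_and]
    rcases eq_or_ne i k with rfl | hik
    · exact fun _ ↦ hk.ne
    rcases eq_or_ne i j with rfl | hij
    · exact fun _ ↦ hj.ne'
    simp [hik, hij]
  refine card_lt_card ((ssubset_iff_of_subset hsub).2 ?_)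
  rcases min_choice (y k - x k) (x j - y j) with h | h
  · exact ⟨k, by simp [hk.ne], by simp [h, hkj]⟩
  · exact ⟨j, by simp [hj.ne'], by simp [h, hkj.symm]⟩

theorem apply_le_apply_of_sum_Iic_le [Fintype ι] [LocallyFiniteOrderBot ι] {h : (ι → ℝ) → ℝ}
    (hsymm : ∀ (σ : Equiv.Perm ι) (x : ι → ℝ), h (x ∘ σ) = h x)
    (hmono : ∀ x y : ι → ℝ, (∀ i, 0 ≤ x i) → (∀ i, x i ≤ y i) → h x ≤ h y)
    (hconc : ConcaveOn ℝ {x : ι → ℝ | ∀ i, 0 ≤ x i} h) {x y : ι → ℝ} (hx : ∀ i, 0 ≤ x i)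
    (hy : Monotone y) (hxy : ∀ m, ∑ i ∈ Iic m, x i ≤ ∑ i ∈ Iic m, y i) : h x ≤ h y := by
  induction hN : #{i | x i ≠ y i} using Nat.strong_induction_on generalizing x with
  | _ N ih =>
  by_cases hle : ∀ i, x i ≤ y i
  · exact hmono x y hx hle
  simp only [not_forall, not_le] at hle
  obtain ⟨k, j, hkj, hk, hj, hbelow⟩ := exists_lt_lt_of_sum_Iic_le hxy hle
  set δ := min (y k - x k) (x j - y j)
  have hδ₀ : 0 ≤ δ := le_min (by linarith) (by linarith)
  have hδx : δ ≤ x j - x k := by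
    have := hy hkj.le
    linarith [min_le_left (y k - x k) (x j - y j), min_le_right (y k - x k) (x j - y j)]
  calc h x ≤ h (transfer x j k δ) := le_apply_transfer hsymm hconc hx hδ₀ hδx
    _ ≤ h y := ih _ (hN ▸ card_ne_transfer_lt hkj.ne hk hj) (transfer_nonneg hx hδ₀ hδx)
        (sum_Iic_transfer_le hxy hkj hbelow (min_le_left _ _)) rfl

end Transfer

theorem stmt_15_general (n : ℕ)
    (u u' : Fin n → ℝ) (hu : ∀ i, 0 ≤ u i) (hu' : ∀ i, 0 ≤ u' i)
    (α : ℝ) (hα : 1 ≤ α) :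
    (∀ k : ℕ, 1 ≤ k → k ≤ n → Qk u' k ≤ α * Qk u k) ↔
    (∀ h : (Fin n → ℝ) → ℝ,
      (∀ x, (∀ i, 0 ≤ x i) → 0 ≤ h x) →
      (∀ (σ : Equiv.Perm (Fin n)) (x : Fin n → ℝ), h (x ∘ σ) = h x) →
      (∀ x y : Fin n → ℝ, (∀ i, 0 ≤ x i) → (∀ i, x i ≤ y i) → h x ≤ h y) →
      ConcaveOn ℝ {x : Fin n → ℝ | ∀ i, 0 ≤ x i} h →
      h u' ≤ α * h u) := by
  refine ⟨fun hQ h hnn hsymm hmono hconc ↦ ?_, fun hh k _ hk ↦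
    hh (Qk · k) (fun x hx ↦ qk_nonneg hx hk) (fun σ x ↦ qk_comp_perm x σ k)
      (fun x y _ hxy ↦ qk_mono hxy hk) (concaveOn_qk hk)⟩
  set σ := Tuple.sort u'
  set τ := Tuple.sort u
  have hprefix (m : Fin n) : ∑ i ∈ Iic m, (u' ∘ σ) i ≤ ∑ i ∈ Iic m, (α • (u ∘ τ)) i := by
    rw [← qk_eq_sum_Iic (Tuple.monotone_sort u'), qk_comp_perm]
    calc Qk u' (m + 1) ≤ α * Qk u (m + 1) := hQ _ (Nat.le_add_left 1 m) m.isLt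
      _ = ∑ i ∈ Iic m, (α • (u ∘ τ)) i := by
        rw [← qk_comp_perm u τ, qk_eq_sum_Iic (Tuple.monotone_sort u), mul_sum]
        rfl
  calc h u' = h (u' ∘ σ) := (hsymm σ u').symm
    _ ≤ h (α • (u ∘ τ)) := apply_le_apply_of_sum_Iic_le hsymm hmono hconc (fun i ↦ hu' _)
        ((Tuple.monotone_sort u).const_smul (zero_le_one.trans hα)) hprefix
    _ ≤ α * h (u ∘ τ) := hconc.map_smul_le_mul (fun _ ↦ le_rfl) (hnn 0 fun _ ↦ le_rfl)
        (fun i ↦ mul_nonneg (zero_le_one.trans hα) (hu _)) hα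
    _ = α * h u := by rw [hsymm]

/-- `α`-majorization (condition on all prefix sums of smallest
coordinates) is equivalent to simultaneously `α`-approximating every
symmetric, monotone, concave, nonnegative welfare function. -/
theorem stmt_15 (n : ℕ) (hn : 1 ≤ n)
    (u u' : Fin n → ℝ) (hu : ∀ i, 0 ≤ u i) (hu' : ∀ i, 0 ≤ u' i)
    (α : ℝ) (hα : 1 ≤ α) :
    (∀ k : ℕ, 1 ≤ k → k ≤ n → Qk u' k ≤ α * Qk u k) ↔
    (∀ h : (Fin n → ℝ) → ℝ,
      (∀ x, (∀ i, 0 ≤ x i) → 0 ≤ h x) →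
      (∀ (σ : Equiv.Perm (Fin n)) (x : Fin n → ℝ), h (x ∘ σ) = h x) →
      (∀ x y : Fin n → ℝ, (∀ i, 0 ≤ x i) → (∀ i, x i ≤ y i) → h x ≤ h y) →
      ConcaveOn ℝ {x : Fin n → ℝ | ∀ i, 0 ≤ x i} h →
      h u' ≤ α * h u) :=
  stmt_15_general n u u' hu hu' α hα
end

section
/- For every x ∈ ℝ≥0^n and every j ∈ {1, …, n}, the sum of the j smallest coordinates of x satisfies Q_j(x) = max over M ≥ 0 of [ Σ_{i=1}^n min(x_i, M) − (n − j) · M ], and the maximum is attained at M equal to the j-th smallest coordinate of x. -/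
private lemma aux_strictMono_le {j : ℕ} {h : Fin j → ℕ} (hm : StrictMono h) :
    ∀ k : Fin j, (k : ℕ) ≤ h k := by
  have H : ∀ m : ℕ, ∀ k : Fin j, (k : ℕ) = m → m ≤ h k := by
    intro m
    induction m with
    | zero => intro k _; exact Nat.zero_le _
    | succ m ih =>
      intro k hk
      have hmj : m < j := by omega
      have hlt : (⟨m, hmj⟩ : Fin j) < k := by
        simp only [Fin.lt_def]; omega
      have h1 := hm hlt
      have h2 := ih ⟨m, hmj⟩ rfl
      omega
  exact fun k => H (k : ℕ) k rfl

/-- Sum over any `j`-subset is at least the sum over the first `j` indices,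
for a monotone function. -/
private lemma aux_sum_ge {n j : ℕ} (hjn : j ≤ n) (y : Fin n → ℝ)
    (hy : Monotone y) (U : Finset (Fin n)) (hU : U.card = j) :
    ∑ k : Fin j, y (Fin.castLE hjn k) ≤ ∑ k ∈ U, y k := by
  have hUrw : ∑ k ∈ U, y k = ∑ k : Fin j, y (U.orderEmbOfFin hU k) := by
    have himg : (Finset.univ : Finset (Fin j)).image (U.orderEmbOfFin hU) = U := by
      apply Finset.coe_injective
      rw [Finset.coe_image, Finset.coe_univ, Set.image_univ,
        Finset.range_orderEmbOfFin]
    conv_lhs => rw [← himg]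
    rw [Finset.sum_image (fun a _ b _ hab => (U.orderEmbOfFin hU).injective hab)]
  rw [hUrw]
  apply Finset.sum_le_sum
  intro k _
  apply hy
  have := aux_strictMono_le
    (h := fun i : Fin j => ((U.orderEmbOfFin hU i : Fin n) : ℕ))
    (fun a b hab => (U.orderEmbOfFin hU).strictMono hab) k
  simpa [Fin.le_def] using this

/-- for nonnegative `x` and `1 ≤ j ≤ n`, the sum of the `j`
smallest coordinates equals the maximum over `M ≥ 0` of
`∑ᵢ min(xᵢ, M) − (n − j)·M`, attained at `M` equal to the `j`-th smallest
coordinate of `x`. -/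
theorem stmt_16 (n j : ℕ) (hj1 : 1 ≤ j) (hjn : j ≤ n)
    (x : Fin n → ℝ) (hx : ∀ i, 0 ≤ x i) :
    IsGreatest
      {t : ℝ | ∃ M : ℝ, 0 ≤ M ∧ t = (∑ i, min (x i) M) - ((n : ℝ) - j) * M}
      (Qk x j) ∧
    (∑ i, min (x i) (x (Tuple.sort x ⟨j - 1, by omega⟩))) -
        ((n : ℝ) - j) * x (Tuple.sort x ⟨j - 1, by omega⟩) = Qk x j := by
  set σ := Tuple.sort x with hσ
  have hmono : Monotone (x ∘ σ) := Tuple.monotone_sort x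
  set jm : Fin n := ⟨j - 1, by omega⟩ with hjm
  set M : ℝ := x (σ jm) with hM
  -- the set of the `j` smallest indices
  set T : Finset (Fin n) :=
    Finset.map (Fin.castLEEmb hjn) Finset.univ with hT
  have hmemT : ∀ k : Fin n, k ∈ T ↔ (k : ℕ) < j := by
    intro k
    simp only [hT, Finset.mem_map, Finset.mem_univ, true_and]
    constructor
    · rintro ⟨a, rfl⟩; simp [Fin.castLEEmb]
    · intro hk; exact ⟨⟨(k : ℕ), hk⟩, by ext; simp [Fin.castLEEmb]⟩
  have hTcard : T.card = j := by simp [hT]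
  set S₀ : Finset (Fin n) := T.image σ with hS₀
  have hS₀card : S₀.card = j := by
    rw [hS₀, Finset.card_image_of_injective _ σ.injective, hTcard]
  have hmemS₀ : ∀ i : Fin n, i ∈ S₀ ↔ (σ.symm i : Fin n) ∈ T := by
    intro i
    simp only [hS₀, Finset.mem_image]
    constructor
    · rintro ⟨k, hk, rfl⟩; simpa using hk
    · intro h; exact ⟨σ.symm i, h, by simp⟩
  set Qs : ℝ := ∑ i ∈ S₀, x i with hQs
  have hQsT : Qs = ∑ k ∈ T, x (σ k) := by
    rw [hQs, hS₀, Finset.sum_image (fun a _ b _ hab => σ.injective hab)]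
  have hQsFin : Qs = ∑ k : Fin j, x (σ (Fin.castLE hjn k)) := by
    rw [hQsT, hT, Finset.sum_map]
    rfl
  -- Qs is the least sum over j-subsets
  have hlb : ∀ S : Finset (Fin n), S.card = j → Qs ≤ ∑ i ∈ S, x i := by
    intro S hS
    have hcardU : (S.image σ.symm).card = j := by
      rw [Finset.card_image_of_injective _ σ.symm.injective, hS]
    have hrw : ∑ i ∈ S, x i = ∑ k ∈ S.image σ.symm, x (σ k) := by
      rw [Finset.sum_image (fun a _ b _ hab => σ.symm.injective hab)]
      simp
    rw [hrw, hQsFin]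
    exact aux_sum_ge hjn (x ∘ σ) hmono _ hcardU
  -- Qk x j = Qs
  have hQk : Qk x j = Qs := by
    rw [Qk]
    apply le_antisymm
    · exact csInf_le ⟨Qs, by rintro s ⟨S, hS, rfl⟩; exact hlb S hS⟩
        ⟨S₀, hS₀card, rfl⟩
    · exact le_csInf ⟨Qs, S₀, hS₀card, rfl⟩ (by rintro s ⟨S, hS, rfl⟩; exact hlb S hS)
  -- cardinality of the complement
  have hcompl : (S₀ᶜ : Finset (Fin n)).card = n - j := by
    rw [Finset.card_compl, hS₀card, Fintype.card_fin]
  have hnj : ((n : ℝ) - j) = ((n - j : ℕ) : ℝ) := by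
    push_cast [hjn]; ring
  -- upper bound for arbitrary M' ≥ 0
  have hupper : ∀ M' : ℝ, 0 ≤ M' →
      (∑ i, min (x i) M') - ((n : ℝ) - j) * M' ≤ Qs := by
    intro M' hM'
    rw [← Finset.sum_add_sum_compl S₀ (fun i => min (x i) M')]
    have h1 : ∑ i ∈ S₀, min (x i) M' ≤ ∑ i ∈ S₀, x i :=
      Finset.sum_le_sum fun i _ => min_le_left _ _
    have h2 : ∑ i ∈ S₀ᶜ, min (x i) M' ≤ ((n : ℝ) - j) * M' := by
      calc ∑ i ∈ S₀ᶜ, min (x i) M' ≤ ∑ _i ∈ S₀ᶜ, M' :=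
            Finset.sum_le_sum fun i _ => min_le_right _ _
        _ = ((n : ℝ) - j) * M' := by
            rw [Finset.sum_const, hcompl, hnj, nsmul_eq_mul]
    linarith
  have hMnonneg : 0 ≤ M := hx _
  -- values at M : small coordinates
  have hsmall : ∀ i ∈ S₀, min (x i) M = x i := by
    intro i hi
    rw [hmemS₀] at hi
    rw [hmemT] at hi
    have hle : σ.symm i ≤ jm := by
      rw [Fin.le_def]; simp only [hjm]; omega
    have := hmono hle
    simp only [Function.comp_apply, Equiv.apply_symm_apply] at this
    exact min_eq_left this
  have hbig : ∀ i ∈ S₀ᶜ, min (x i) M = M := by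
    intro i hi
    rw [Finset.mem_compl, hmemS₀, hmemT, not_lt] at hi
    have hle : jm ≤ σ.symm i := by
      rw [Fin.le_def]; simp only [hjm]; omega
    have := hmono hle
    simp only [Function.comp_apply, Equiv.apply_symm_apply] at this
    exact min_eq_right this
  -- equality at M
  have heq : (∑ i, min (x i) M) - ((n : ℝ) - j) * M = Qs := by
    rw [← Finset.sum_add_sum_compl S₀ (fun i => min (x i) M),
      Finset.sum_congr rfl hsmall, Finset.sum_congr rfl hbig,
      Finset.sum_const, hcompl, hnj, nsmul_eq_mul, ← hQs]
    ring
  refine ⟨⟨⟨M, hMnonneg, hQk.trans heq.symm⟩, ?_⟩, heq.trans hQk.symm⟩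
  rintro t ⟨M', hM', rfl⟩
  rw [hQk]
  exact hupper M' hM'
end
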